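/- Suppose Φ = φ⟦ψ1,…,ψk⟧ is an organized formula. Then every formula in [Φ]_{𝒯∖{N}} has the form φ′⟦ψ′1,…,ψ′k⟧, where φ′ ∈ [φ]_{𝒯∖{N}} and ψ′i ∈ [ψi]_{𝒯∖{N}} for each i = 1,…,k; here the rules of 𝒯∖{N} are applied to the holey formula φ under the association i ↦ free(ψi) defined on each hole i = 1,…,k. -/

import Mathlib

namespace WidthPaper

/-- Positive (relational) first-order formulas: atoms `R(v₁,…,vₖ)` (relation symbol
coded by a natural number, arguments a list of variables), binary `∧`, binary `∨`,
and quantifications `∃x`, `∀x`. -/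
inductive PFO : Type where
  | atom : ℕ → List ℕ → PFO
  | conj : PFO → PFO → PFO
  | disj : PFO → PFO → PFO
  | ex   : ℕ → PFO → PFO
  | all  : ℕ → PFO → PFO
  deriving DecidableEq

namespace PFO

/-- Free variables of a pfo-formula. -/
def free : PFO → Finset ℕ
  | .atom _ vs => vs.toFinset
  | .conj f g => free f ∪ free g
  | .disj f g => free f ∪ free g
  | .ex x f => free f \ {x}
  | .all x f => free f \ {x}

/-- Replace every free occurrence of `x` by `y`. -/
def rename (x y : ℕ) : PFO → PFO
  | .atom r vs => .atom r (vs.map fun v => if v = x then y else v)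
  | .conj f g => .conj (rename x y f) (rename x y g)
  | .disj f g => .disj (rename x y f) (rename x y g)
  | .ex z f => if z = x then .ex z f else .ex z (rename x y f)
  | .all z f => if z = x then .all z f else .all z (rename x y f)

/-- Associativity rule (at the root). -/
inductive RA : PFO → PFO → Prop
  | conj1 (f g h : PFO) : RA (.conj f (.conj g h)) (.conj (.conj f g) h)
  | conj2 (f g h : PFO) : RA (.conj (.conj f g) h) (.conj f (.conj g h))
  | disj1 (f g h : PFO) : RA (.disj f (.disj g h)) (.disj (.disj f g) h)
  | disj2 (f g h : PFO) : RA (.disj (.disj f g) h) (.disj f (.disj g h))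

/-- Commutativity rule (at the root). -/
inductive RC : PFO → PFO → Prop
  | conj (f g : PFO) : RC (.conj f g) (.conj g f)
  | disj (f g : PFO) : RC (.disj f g) (.disj g f)

/-- Reordering rule (at the root): `QxQyF → QyQxF`. -/
inductive RO : PFO → PFO → Prop
  | ex (x y : ℕ) (f : PFO) : RO (.ex x (.ex y f)) (.ex y (.ex x f))
  | all (x y : ℕ) (f : PFO) : RO (.all x (.all y f)) (.all y (.all x f))

/-- Pushdown rule (at the root). -/
inductive RPd : PFO → PFO → Prop
  | ex (x : ℕ) (f g : PFO) : x ∉ free g → RPd (.ex x (.conj f g)) (.conj (.ex x f) g)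
  | all (x : ℕ) (f g : PFO) : x ∉ free g → RPd (.all x (.disj f g)) (.disj (.all x f) g)

/-- Pushup rule: the inverse of pushdown. -/
def RPu : PFO → PFO → Prop := fun f g => RPd g f

/-- Renaming rule (at the root). -/
inductive RN : PFO → PFO → Prop
  | ex (x y : ℕ) (f : PFO) : y ∉ free f → RN (.ex x f) (.ex y (rename x y f))
  | all (x y : ℕ) (f : PFO) : y ∉ free f → RN (.all x f) (.all y (rename x y f))

/-- Splitdown rule (at the root). -/
inductive RSd : PFO → PFO → Prop
  | ex (x : ℕ) (f g : PFO) : RSd (.ex x (.disj f g)) (.disj (.ex x f) (.ex x g))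
  | all (x : ℕ) (f g : PFO) : RSd (.all x (.conj f g)) (.conj (.all x f) (.all x g))

/-- Splitup rule: the inverse of splitdown. -/
def RSu : PFO → PFO → Prop := fun f g => RSd g f

/-- Removal rule (at the root). -/
inductive RM : PFO → PFO → Prop
  | ex (x : ℕ) (f : PFO) : x ∉ free f → RM (.ex x f) f
  | all (x : ℕ) (f : PFO) : x ∉ free f → RM (.all x f) f

/-- Closure of a root rewriting relation under application at any subformula position. -/
inductive Step (r : PFO → PFO → Prop) : PFO → PFO → Prop
  | root {f g} : r f g → Step r f g
  | conjL {f f' g} : Step r f f' → Step r (.conj f g) (.conj f' g)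
  | conjR {f g g'} : Step r g g' → Step r (.conj f g) (.conj f g')
  | disjL {f f' g} : Step r f f' → Step r (.disj f g) (.disj f' g)
  | disjR {f g g'} : Step r g g' → Step r (.disj f g) (.disj f g')
  | exC {x f f'} : Step r f f' → Step r (.ex x f) (.ex x f')
  | allC {x f f'} : Step r f f' → Step r (.all x f) (.all x f')

/-- Union of the root rules in ACO = {A, C, O}. -/
def rACO : PFO → PFO → Prop := fun f g => RA f g ∨ RC f g ∨ RO f g

/-- Union of the root rules in 𝒯 = {A, C, O, P↓, P↑, N}. -/
def rT : PFO → PFO → Prop := fun f g => rACO f g ∨ RPd f g ∨ RPu f g ∨ RN f g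

/-- Union of the root rules in 𝒯 ∖ {N} = {A, C, O, P↓, P↑}. -/
def rTnoN : PFO → PFO → Prop := fun f g => rACO f g ∨ RPd f g ∨ RPu f g

/-- Union of the root rules {P↓, S↓, M} (the reduction of the system Y). -/
def rY : PFO → PFO → Prop := fun f g => RPd f g ∨ RSd f g ∨ RM f g

/-- Union of the root rules {S↓, M} (the reduction of the system Y′). -/
def rYp : PFO → PFO → Prop := fun f g => RSd f g ∨ RM f g

/-- Union of all the root rules 𝒜 = 𝒯 ∪ {S↓, S↑, M}. -/
def rAll : PFO → PFO → Prop := fun f g => rT f g ∨ RSd f g ∨ RSu f g ∨ RM f g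

/-- The ↔*_R-equivalence class `[φ]_R` of `φ`, for the root-rule union `r`. -/
def eqvCls (r : PFO → PFO → Prop) (φ : PFO) : Set PFO :=
  {ψ | Relation.EqvGen (Step r) φ ψ}

/-- A rule (given by its root relation) is applicable to a formula if it can be applied
at some subformula position. -/
def Applicable (r : PFO → PFO → Prop) (φ : PFO) : Prop := ∃ ψ, Step r φ ψ

/-- A rule is applicable to a set of formulas if it is applicable to some member. -/
def ApplicableSet (r : PFO → PFO → Prop) (S : Set PFO) : Prop := ∃ φ ∈ S, Applicable r φ

/-- Number of nodes of the syntax tree. -/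
def size : PFO → ℕ
  | .atom _ _ => 1
  | .conj f g => size f + size g + 1
  | .disj f g => size f + size g + 1
  | .ex _ f => size f + 1
  | .all _ f => size f + 1

/-- List of all subformula occurrences. -/
def subformulas : PFO → List PFO
  | .atom r vs => [.atom r vs]
  | .conj f g => .conj f g :: (subformulas f ++ subformulas g)
  | .disj f g => .disj f g :: (subformulas f ++ subformulas g)
  | .ex x f => .ex x f :: subformulas f
  | .all x f => .all x f :: subformulas f

/-- The width of a formula: the maximum number of free variables over all subformulas. -/
def width (φ : PFO) : ℕ := ((subformulas φ).map fun ψ => (free ψ).card).foldr max 0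

/-- The width of a set of formulas: the minimum width over its members. -/
noncomputable def setWidth (S : Set PFO) : ℕ := sInf (width '' S)

/-- The setoid of ↔*_ACO-equivalence. -/
def acoSetoid : Setoid PFO := ⟨Relation.EqvGen (Step rACO), Relation.EqvGen.is_equivalence _⟩

/-- The setoid of ↔*_𝒯-equivalence. -/
def tSetoid : Setoid PFO := ⟨Relation.EqvGen (Step rT), Relation.EqvGen.is_equivalence _⟩

/-- The reduction of a quotient system `(PFO, Step r) / s`:  `C → C′` iff there are
`d ∈ C` and `d′ ∈ C′` with `Step r d d′`. -/
def qStep (s : Setoid PFO) (r : PFO → PFO → Prop) (C C' : Quotient s) : Prop :=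
  ∃ d d', C = Quotient.mk s d ∧ C' = Quotient.mk s d' ∧ Step r d d'

/-- The multiset of quantified-variable occurrences of a formula. -/
def quantVars : PFO → Multiset ℕ
  | .atom _ _ => 0
  | .conj f g => quantVars f + quantVars g
  | .disj f g => quantVars f + quantVars g
  | .ex x f => x ::ₘ quantVars f
  | .all x f => x ::ₘ quantVars f

/-- A formula is standardized if no variable is quantified at two different occurrences
and no quantified variable is free in the whole formula. -/
def Standardized (φ : PFO) : Prop :=
  (quantVars φ).Nodup ∧ ∀ x ∈ quantVars φ, x ∉ free φ

/-- A formula is pushed-down if the pushdown rule is not applicable to it. -/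
def PushedDown (φ : PFO) : Prop := ¬ Applicable RPd φ

/-- A set of formulas is pushed-down if each member is pushed-down. -/
def PushedDownSet (S : Set PFO) : Prop := ∀ φ ∈ S, PushedDown φ

/-- The multiset of conjuncts of a formula (collapsing the top `∧`-structure). -/
def conjuncts : PFO → Multiset PFO
  | .conj f g => conjuncts f + conjuncts g
  | .atom r vs => {PFO.atom r vs}
  | .disj f g => {PFO.disj f g}
  | .ex x f => {PFO.ex x f}
  | .all x f => {PFO.all x f}

/-- The multiset of disjuncts of a formula (collapsing the top `∨`-structure). -/
def disjuncts : PFO → Multiset PFO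
  | .disj f g => disjuncts f + disjuncts g
  | .atom r vs => {PFO.atom r vs}
  | .conj f g => {PFO.conj f g}
  | .ex x f => {PFO.ex x f}
  | .all x f => {PFO.all x f}

/-- Number of atoms of a formula. -/
def atomCount : PFO → ℕ
  | .atom _ _ => 1
  | .conj f g => atomCount f + atomCount g
  | .disj f g => atomCount f + atomCount g
  | .ex _ f => atomCount f
  | .all _ f => atomCount f

/-- `φ` is an atom. -/
def isAtom : PFO → Prop
  | .atom _ _ => True
  | _ => False

/-- The top operation of `φ` is `∃` or `∧`. -/
def topEA : PFO → Prop
  | .conj _ _ => True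
  | .ex _ _ => True
  | _ => False

/-- The top operation of `φ` is `∀` or `∨`. -/
def topAO : PFO → Prop
  | .disj _ _ => True
  | .all _ _ => True
  | _ => False

/-- `φ` is an {∃,∧}-formula (built from atoms using only `∧` and `∃`). -/
def isEAFormula : PFO → Prop
  | .atom _ _ => True
  | .conj f g => isEAFormula f ∧ isEAFormula g
  | .ex _ f => isEAFormula f
  | _ => False

end PFO

open PFO

/-- Holey pfo-formulas: leaves are natural-number holes. -/
inductive Holey : Type where
  | hole : ℕ → Holey
  | conj : Holey → Holey → Holey
  | disj : Holey → Holey → Holey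
  | ex   : ℕ → Holey → Holey
  | all  : ℕ → Holey → Holey
  deriving DecidableEq

namespace Holey

/-- The multiset of hole occurrences. -/
def holes : Holey → Multiset ℕ
  | .hole i => {i}
  | .conj f g => holes f + holes g
  | .disj f g => holes f + holes g
  | .ex _ f => holes f
  | .all _ f => holes f

/-- A holey {∃,∧}-formula: uses only holes, `∧` and `∃`. -/
def isEA : Holey → Prop
  | .hole _ => True
  | .conj f g => isEA f ∧ isEA g
  | .ex _ f => isEA f
  | _ => False

/-- A holey {∀,∨}-formula: uses only holes, `∨` and `∀`. -/
def isAO : Holey → Prop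
  | .hole _ => True
  | .disj f g => isAO f ∧ isAO g
  | .all _ f => isAO f
  | _ => False

/-- The holey formula is atomic (a single hole). -/
def isHole : Holey → Prop
  | .hole _ => True
  | _ => False

/-- Free variables of a holey formula under an association `a` for the holes. -/
def hfree (a : ℕ → Finset ℕ) : Holey → Finset ℕ
  | .hole i => a i
  | .conj f g => hfree a f ∪ hfree a g
  | .disj f g => hfree a f ∪ hfree a g
  | .ex x f => hfree a f \ {x}
  | .all x f => hfree a f \ {x}

/-- Associativity rule on holey formulas (at the root). -/
inductive HRA : Holey → Holey → Prop
  | conj1 (f g h : Holey) : HRA (.conj f (.conj g h)) (.conj (.conj f g) h)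
  | conj2 (f g h : Holey) : HRA (.conj (.conj f g) h) (.conj f (.conj g h))
  | disj1 (f g h : Holey) : HRA (.disj f (.disj g h)) (.disj (.disj f g) h)
  | disj2 (f g h : Holey) : HRA (.disj (.disj f g) h) (.disj f (.disj g h))

/-- Commutativity rule on holey formulas (at the root). -/
inductive HRC : Holey → Holey → Prop
  | conj (f g : Holey) : HRC (.conj f g) (.conj g f)
  | disj (f g : Holey) : HRC (.disj f g) (.disj g f)

/-- Reordering rule on holey formulas (at the root). -/
inductive HRO : Holey → Holey → Prop
  | ex (x y : ℕ) (f : Holey) : HRO (.ex x (.ex y f)) (.ex y (.ex x f))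
  | all (x y : ℕ) (f : Holey) : HRO (.all x (.all y f)) (.all y (.all x f))

/-- Pushdown rule on holey formulas under an association (at the root). -/
inductive HRPd (a : ℕ → Finset ℕ) : Holey → Holey → Prop
  | ex (x : ℕ) (f g : Holey) : x ∉ hfree a g →
      HRPd a (.ex x (.conj f g)) (.conj (.ex x f) g)
  | all (x : ℕ) (f g : Holey) : x ∉ hfree a g →
      HRPd a (.all x (.disj f g)) (.disj (.all x f) g)

/-- Union of the root rules 𝒯 ∖ {N} on holey formulas, under association `a`. -/
def hrTnoN (a : ℕ → Finset ℕ) : Holey → Holey → Prop :=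
  fun f g => HRA f g ∨ HRC f g ∨ HRO f g ∨ HRPd a f g ∨ HRPd a g f

/-- Closure of a root rewriting relation on holey formulas under application at
any subformula position. -/
inductive HStep (r : Holey → Holey → Prop) : Holey → Holey → Prop
  | root {f g} : r f g → HStep r f g
  | conjL {f f' g} : HStep r f f' → HStep r (.conj f g) (.conj f' g)
  | conjR {f g g'} : HStep r g g' → HStep r (.conj f g) (.conj f g')
  | disjL {f f' g} : HStep r f f' → HStep r (.disj f g) (.disj f' g)
  | disjR {f g g'} : HStep r g g' → HStep r (.disj f g) (.disj f g')
  | exC {x f f'} : HStep r f f' → HStep r (.ex x f) (.ex x f')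
  | allC {x f f'} : HStep r f f' → HStep r (.all x f) (.all x f')

/-- The equivalence class of a holey formula under ↔* of the rules 𝒯∖{N}
(under association `a`). -/
def hcls (a : ℕ → Finset ℕ) (φ : Holey) : Set Holey :=
  {ψ | Relation.EqvGen (HStep (hrTnoN a)) φ ψ}

/-- List of all holey subformula occurrences. -/
def hsubformulas : Holey → List Holey
  | .hole i => [.hole i]
  | .conj f g => .conj f g :: (hsubformulas f ++ hsubformulas g)
  | .disj f g => .disj f g :: (hsubformulas f ++ hsubformulas g)
  | .ex x f => .ex x f :: hsubformulas f
  | .all x f => .all x f :: hsubformulas f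

/-- Width of a holey formula under an association. -/
def hwidth (a : ℕ → Finset ℕ) (φ : Holey) : ℕ :=
  ((hsubformulas φ).map fun ψ => (hfree a ψ).card).foldr max 0

/-- Minimum width over a set of holey formulas. -/
noncomputable def setHWidth (a : ℕ → Finset ℕ) (S : Set Holey) : ℕ :=
  sInf ((hwidth a) '' S)

/-- The multiset of quantified-variable occurrences of a holey formula. -/
def hQuantVars : Holey → Multiset ℕ
  | .hole _ => 0
  | .conj f g => hQuantVars f + hQuantVars g
  | .disj f g => hQuantVars f + hQuantVars g
  | .ex x f => x ::ₘ hQuantVars f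
  | .all x f => x ::ₘ hQuantVars f

/-- A holey formula (with association `a`) is standardized. -/
def HStandardized (a : ℕ → Finset ℕ) (φ : Holey) : Prop :=
  (hQuantVars φ).Nodup ∧ ∀ x ∈ hQuantVars φ, x ∉ hfree a φ

/-- Subformula relation on holey formulas. -/
inductive HSub : Holey → Holey → Prop
  | refl (φ : Holey) : HSub φ φ
  | conjL {ψ f g} : HSub ψ f → HSub ψ (.conj f g)
  | conjR {ψ f g} : HSub ψ g → HSub ψ (.conj f g)
  | disjL {ψ f g} : HSub ψ f → HSub ψ (.disj f g)
  | disjR {ψ f g} : HSub ψ g → HSub ψ (.disj f g)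
  | exS {ψ x f} : HSub ψ f → HSub ψ (.ex x f)
  | allS {ψ x f} : HSub ψ f → HSub ψ (.all x f)

/-- The multiset of conjuncts of a holey formula. -/
def hconjuncts : Holey → Multiset Holey
  | .conj f g => hconjuncts f + hconjuncts g
  | .hole i => {Holey.hole i}
  | .disj f g => {Holey.disj f g}
  | .ex x f => {Holey.ex x f}
  | .all x f => {Holey.all x f}

end Holey

open Holey

/-- Substituting formulas for the holes of a holey formula:  `φ⟦ψ⟧`. -/
def substH (ψ : ℕ → PFO) : Holey → PFO
  | .hole i => ψ i
  | .conj f g => .conj (substH ψ f) (substH ψ g)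
  | .disj f g => .disj (substH ψ f) (substH ψ g)
  | .ex x f => .ex x (substH ψ f)
  | .all x f => .all x (substH ψ f)

mutual
/-- {∃,∧}-organized formulas. -/
inductive OrganizedEA : PFO → Prop
  | mk (h : Holey) (ψ : ℕ → PFO) :
      Holey.isEA h → ¬ Holey.isHole h → (Holey.holes h).Nodup →
      (∀ i ∈ Holey.holes h, ¬ PFO.isAtom (ψ i) → OrganizedAO (ψ i)) →
      OrganizedEA (substH ψ h)
/-- {∀,∨}-organized formulas. -/
inductive OrganizedAO : PFO → Prop
  | mk (h : Holey) (ψ : ℕ → PFO) :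
      Holey.isAO h → ¬ Holey.isHole h → (Holey.holes h).Nodup →
      (∀ i ∈ Holey.holes h, ¬ PFO.isAtom (ψ i) → OrganizedEA (ψ i)) →
      OrganizedAO (substH ψ h)
end

/-- Names for the rewriting rules. -/
inductive RuleName : Type where
  | A | C | O | Pd | Pu | N | Sd | Su | M
  deriving DecidableEq

/-- The one-step rewriting relation of a named rule (applied at any subformula position). -/
def ruleRel : RuleName → PFO → PFO → Prop
  | .A => Step RA
  | .C => Step RC
  | .O => Step RO
  | .Pd => Step RPd
  | .Pu => Step RPu
  | .N => Step RN
  | .Sd => Step RSd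
  | .Su => Step RSu
  | .M => Step RM

/-- `Chain φ L θ`: a rewriting sequence from `φ` to `θ` applying the rules named in `L`
in order. -/
inductive Chain : PFO → List RuleName → PFO → Prop
  | nil (φ : PFO) : Chain φ [] φ
  | cons {φ ψ θ : PFO} {r : RuleName} {rs : List RuleName} :
      ruleRel r φ ψ → Chain ψ rs θ → Chain φ (r :: rs) θ

/-- A tree decomposition of the hypergraph with vertex set `V` and edge set `E`. -/
structure TreeDecomp (V : Finset ℕ) (E : Finset (Finset ℕ)) : Type 1 where
  ι : Type
  fin : Fintype ι
  T : SimpleGraph ι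
  tree : T.IsTree
  bag : ι → Finset ℕ
  bag_sub : ∀ t, bag t ⊆ V
  vertCover : ∀ v ∈ V, ∃ t, v ∈ bag t
  edgeCover : ∀ e ∈ E, ∃ t, e ⊆ bag t
  conn : ∀ v ∈ V, (T.induce {t | v ∈ bag t}).Connected

/-- The bagsize of a tree decomposition: the maximum bag size. -/
def TreeDecomp.bagsize {V : Finset ℕ} {E : Finset (Finset ℕ)} (D : TreeDecomp V E) : ℕ :=
  letI := D.fin
  Finset.univ.sup fun t => (D.bag t).card

/-- The treewidth of the hypergraph `(V, E)` (as an integer): the minimum bagsize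
over all tree decompositions, minus one. -/
noncomputable def treewidth (V : Finset ℕ) (E : Finset (Finset ℕ)) : ℤ :=
  sInf {n : ℤ | ∃ D : TreeDecomp V E, (D.bagsize : ℤ) = n} - 1

/-- Vertex set of the hypergraph of a holey formula with association `a`. -/
def holeyVerts (a : ℕ → Finset ℕ) (φ : Holey) : Finset ℕ :=
  (Holey.holes φ).toFinset.sup a

/-- Edge set of the hypergraph of a holey formula with association `a`:
an edge `a i` per hole `i`, plus the edge of the free variables. -/
def holeyEdges (a : ℕ → Finset ℕ) (φ : Holey) : Finset (Finset ℕ) :=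
  ((Holey.holes φ).toFinset.image a) ∪ {hfree a φ}

/-- The edges of the hypergraph of a pfo-formula: one edge per atom. -/
def atomEdges : PFO → Finset (Finset ℕ)
  | .atom _ vs => {vs.toFinset}
  | .conj f g => atomEdges f ∪ atomEdges g
  | .disj f g => atomEdges f ∪ atomEdges g
  | .ex _ f => atomEdges f
  | .all _ f => atomEdges f

/-- The vertices of the hypergraph of a pfo-formula: all variables of its atoms. -/
def atomVerts (φ : PFO) : Finset ℕ := (atomEdges φ).sup id

/-- The potential of a formula: the sum, over all subformula occurrences rooted at
a quantification, of the square of the number of atoms. -/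
def pot : PFO → ℕ
  | .atom _ _ => 0
  | .conj f g => pot f + pot g
  | .disj f g => pot f + pot g
  | .ex x f => atomCount (.ex x f) ^ 2 + pot f
  | .all x f => atomCount (.all x f) ^ 2 + pot f

/-- `⋈_x`: remove from a multiset of variable-sets all sets containing `x`, and add the
set obtained as the union of the removed sets with `x` deleted. -/
def joinVar (x : ℕ) (S : Multiset (Finset ℕ)) : Multiset (Finset ℕ) :=
  (S.filter (fun U => x ∉ U)) + {(S.filter (fun U => x ∈ U)).sup \ ({x} : Finset ℕ)}

/-- The multiset `mset_𝒯` of a holey formula under an association `a`. -/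
def msetT (a : ℕ → Finset ℕ) : Holey → Multiset (Finset ℕ)
  | .hole i => {a i}
  | .conj f g => msetT a f + msetT a g
  | .disj f g => msetT a f + msetT a g
  | .ex x f => joinVar x (msetT a f)
  | .all x f => joinVar x (msetT a f)

end WidthPaper

/-!
Every region `ψ i` of an organized formula is an atom or starts with a connective of the
other class than the skeleton `h`. Each rule of `𝒯 ∖ {N}` matches a pattern whose inner
nodes all belong to one class (`∧`/`∃` or `∨`/`∀`), so a redex rooted in the skeleton lies
entirely in the skeleton and is mirrored by the same rule on `h`; the side condition of
`P↓`/`P↑` transfers because `free (h⟦ψ⟧)` is the free-variable set of `h` under the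
association `i ↦ free (ψ i)`. All other redexes lie inside one region. Rewriting preserves
free variables, the multiset of holes and the class of the top connective, so this
decomposition persists along a whole rewriting sequence.
-/

namespace WidthPaper

namespace PFO

theorem rTnoN_symm {f g : PFO} : rTnoN f g → rTnoN g f := by
  rintro ((h | h | h) | h | h)
  · cases h <;> exact .inl (.inl (by constructor))
  · cases h <;> exact .inl (.inr (.inl (by constructor)))
  · cases h <;> exact .inl (.inr (.inr (by constructor)))
  · exact .inr (.inr h)
  · exact .inr (.inl h)

instance : Std.Symm rTnoN := ⟨fun _ _ => rTnoN_symm⟩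

instance {r : PFO → PFO → Prop} [Std.Symm r] : Std.Symm (Step r) where
  symm _ _ hs := by
    induction hs with
    | root h => exact .root (Std.Symm.symm _ _ h)
    | conjL _ ih => exact .conjL ih
    | conjR _ ih => exact .conjR ih
    | disjL _ ih => exact .disjL ih
    | disjR _ ih => exact .disjR ih
    | exC _ ih => exact .exC ih
    | allC _ ih => exact .allC ih

theorem free_eq_of_rTnoN {f g : PFO} (hr : rTnoN f g) : free g = free f := by
  have pushdown : ∀ (x : ℕ) (f g : PFO), x ∉ free g →
      (free f ∪ free g) \ {x} = free f \ {x} ∪ free g := fun x f g hx => by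
    rw [Finset.union_sdiff_distrib, Finset.sdiff_singleton_eq_erase x (free g),
      Finset.erase_eq_of_notMem hx]
  rcases hr with ((h | h | h) | h | h)
  · cases h <;> simp only [free, Finset.union_assoc]
  · cases h <;> simp only [free, Finset.union_comm]
  · cases h <;> exact sdiff_sdiff_comm
  · cases h with
    | ex x f g hx => exact (pushdown x f g hx).symm
    | all x f g hx => exact (pushdown x f g hx).symm
  · cases h with
    | ex x f g hx => exact pushdown x f g hx
    | all x f g hx => exact pushdown x f g hx

theorem Step.free_eq {r : PFO → PFO → Prop} (hr : ∀ f g, r f g → free g = free f)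
    {f g : PFO} (hs : Step r f g) : free g = free f := by
  induction hs with
  | root h => exact hr _ _ h
  | conjL _ ih | conjR _ ih | disjL _ ih | disjR _ ih | exC _ ih | allC _ ih =>
    simp only [free, ih]

theorem Step.topEA_iff {f g : PFO} (hs : Step rTnoN f g) : topEA g ↔ topEA f := by
  rcases hs with ((h | h | h) | h | h) | _ | _ | _ | _ | _ | _
  all_goals first | exact Iff.rfl | cases h <;> exact Iff.rfl

theorem Step.topAO_iff {f g : PFO} (hs : Step rTnoN f g) : topAO g ↔ topAO f := by
  rcases hs with ((h | h | h) | h | h) | _ | _ | _ | _ | _ | _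
  all_goals first | exact Iff.rfl | cases h <;> exact Iff.rfl

end PFO

namespace Holey

variable {a : ℕ → Finset ℕ} {h h' : Holey}

theorem HStep.holes_eq (hs : HStep (hrTnoN a) h h') : holes h' = holes h := by
  induction hs with
  | root hr =>
    rcases hr with h | h | h | h | h <;> cases h <;>
      simp only [holes, add_assoc, add_comm]
  | conjL _ ih | conjR _ ih | disjL _ ih | disjR _ ih | exC _ ih | allC _ ih =>
    simp only [holes, ih]

theorem HStep.isEA (hs : HStep (hrTnoN a) h h') (hEA : isEA h) : isEA h' := by
  induction hs with
  | root hr => rcases hr with h | h | h | h | h <;> cases h <;> simp_all [Holey.isEA]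
  | _ => simp_all [Holey.isEA]

theorem HStep.isAO (hs : HStep (hrTnoN a) h h') (hAO : isAO h) : isAO h' := by
  induction hs with
  | root hr => rcases hr with h | h | h | h | h <;> cases h <;> simp_all [Holey.isAO]
  | _ => simp_all [Holey.isAO]

end Holey

open PFO Holey

variable {ψ : ℕ → PFO} {h : Holey}

theorem free_substH (ψ : ℕ → PFO) (h : Holey) :
    free (substH ψ h) = hfree (fun i => free (ψ i)) h := by
  induction h <;> simp only [substH, free, hfree, *]

theorem substH_update_of_notMem {i : ℕ} (g : PFO) (hi : i ∉ holes h) :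
    substH (Function.update ψ i g) h = substH ψ h := by
  induction h with
  | hole j => exact Function.update_of_ne (Ne.symm (by simpa [holes] using hi)) g ψ
  | _ => simp_all [substH, holes]

theorem exists_conj_of_substH_eq_conj {g₁ g₂ : PFO} (hψ : ∀ i ∈ holes h, ¬ topEA (ψ i))
    (he : substH ψ h = .conj g₁ g₂) :
    ∃ h₁ h₂, h = .conj h₁ h₂ ∧ substH ψ h₁ = g₁ ∧ substH ψ h₂ = g₂ := by
  cases h <;> simp only [substH, reduceCtorEq, PFO.conj.injEq] at he
  case hole i => exact absurd (he ▸ trivial) (hψ i (Multiset.mem_singleton_self i))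
  case conj h₁ h₂ => exact ⟨h₁, h₂, rfl, he⟩

theorem exists_ex_of_substH_eq_ex {x : ℕ} {g : PFO} (hψ : ∀ i ∈ holes h, ¬ topEA (ψ i))
    (he : substH ψ h = .ex x g) : ∃ h₁, h = .ex x h₁ ∧ substH ψ h₁ = g := by
  cases h <;> simp only [substH, reduceCtorEq, PFO.ex.injEq] at he
  case hole i => exact absurd (he ▸ trivial) (hψ i (Multiset.mem_singleton_self i))
  case ex y h₁ => exact ⟨h₁, he.1 ▸ rfl, he.2⟩

theorem exists_disj_of_substH_eq_disj {g₁ g₂ : PFO} (hψ : ∀ i ∈ holes h, ¬ topAO (ψ i))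
    (he : substH ψ h = .disj g₁ g₂) :
    ∃ h₁ h₂, h = .disj h₁ h₂ ∧ substH ψ h₁ = g₁ ∧ substH ψ h₂ = g₂ := by
  cases h <;> simp only [substH, reduceCtorEq, PFO.disj.injEq] at he
  case hole i => exact absurd (he ▸ trivial) (hψ i (Multiset.mem_singleton_self i))
  case disj h₁ h₂ => exact ⟨h₁, h₂, rfl, he⟩

theorem exists_all_of_substH_eq_all {x : ℕ} {g : PFO} (hψ : ∀ i ∈ holes h, ¬ topAO (ψ i))
    (he : substH ψ h = .all x g) : ∃ h₁, h = .all x h₁ ∧ substH ψ h₁ = g := by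
  cases h <;> simp only [substH, reduceCtorEq, PFO.all.injEq] at he
  case hole i => exact absurd (he ▸ trivial) (hψ i (Multiset.mem_singleton_self i))
  case all y h₁ => exact ⟨h₁, he.1 ▸ rfl, he.2⟩

def Separated (h : Holey) (ψ : ℕ → PFO) : Prop :=
  (isEA h ∧ ∀ i ∈ holes h, ¬ topEA (ψ i)) ∨ (isAO h ∧ ∀ i ∈ holes h, ¬ topAO (ψ i))

theorem Separated.mono {h₁ : Holey} (hs : Separated h ψ) (hEA : isEA h → isEA h₁)
    (hAO : isAO h → isAO h₁) (hholes : ∀ i ∈ holes h₁, i ∈ holes h) : Separated h₁ ψ :=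
  hs.imp (fun ⟨hh, hψ⟩ => ⟨hEA hh, fun i hi => hψ i (hholes i hi)⟩)
    (fun ⟨hh, hψ⟩ => ⟨hAO hh, fun i hi => hψ i (hholes i hi)⟩)

theorem Separated.of_hStep {a : ℕ → Finset ℕ} {h' : Holey} (hs : Separated h ψ)
    (hh : HStep (hrTnoN a) h h') : Separated h' ψ :=
  hs.mono hh.isEA hh.isAO fun _ hi => hh.holes_eq ▸ hi

theorem apply_update_eq_of_apply_eq {α β γ : Type*} [DecidableEq α] {F : β → γ} {ψ : α → β}
    {i : α} {g : β} (hF : F g = F (ψ i)) (j : α) : F (Function.update ψ i g j) = F (ψ j) :=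
  congrFun (by rw [Function.comp_update, hF]; exact Function.update_eq_self i _ :
    F ∘ Function.update ψ i g = F ∘ ψ) j

theorem Separated.update {i : ℕ} {g : PFO} (hs : Separated h ψ) (hg : Step rTnoN (ψ i) g) :
    Separated h (Function.update ψ i g) := by
  simpa only [Separated, apply_update_eq_of_apply_eq (propext hg.topEA_iff),
    apply_update_eq_of_apply_eq (propext hg.topAO_iff)] using hs

theorem exists_hrTnoN_of_isEA {Φ' : PFO} (hEA : isEA h) (hψ : ∀ i ∈ holes h, ¬ topEA (ψ i))
    (hh : ¬ isHole h) (hr : rTnoN (substH ψ h) Φ') :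
    ∃ h', hrTnoN (fun i => free (ψ i)) h h' ∧ Φ' = substH ψ h' := by
  cases h with
  | hole => exact absurd trivial hh
  | disj | all => exact False.elim hEA
  | conj h₁ h₂ =>
    have hψ₁ : ∀ i ∈ holes h₁, ¬ topEA (ψ i) := fun i hi => hψ i (Multiset.mem_add.2 (.inl hi))
    have hψ₂ : ∀ i ∈ holes h₂, ¬ topEA (ψ i) := fun i hi => hψ i (Multiset.mem_add.2 (.inr hi))
    rw [substH] at hr
    generalize hA : substH ψ h₁ = A, hB : substH ψ h₂ = B at hr
    rcases hr with ((hr | hr | hr) | hr | hr) <;> cases hr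
    case conj1 =>
      obtain ⟨h₂₁, h₂₂, rfl, rfl, rfl⟩ := exists_conj_of_substH_eq_conj hψ₂ hB
      exact ⟨.conj (.conj h₁ h₂₁) h₂₂, .inl (.conj1 _ _ _), by rw [← hA]; rfl⟩
    case conj2 =>
      obtain ⟨h₁₁, h₁₂, rfl, rfl, rfl⟩ := exists_conj_of_substH_eq_conj hψ₁ hA
      exact ⟨.conj h₁₁ (.conj h₁₂ h₂), .inl (.conj2 _ _ _), by rw [← hB]; rfl⟩
    case conj =>
      exact ⟨.conj h₂ h₁, .inr (.inl (.conj _ _)), by rw [← hA, ← hB]; rfl⟩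
    case ex x f hx =>
      obtain ⟨h₁₁, rfl, rfl⟩ := exists_ex_of_substH_eq_ex hψ₁ hA
      subst hB
      rw [free_substH] at hx
      exact ⟨.ex x (.conj h₁₁ h₂), .inr (.inr (.inr (.inr (.ex _ _ _ hx)))), rfl⟩
  | ex x h₁ =>
    rw [substH] at hr
    generalize hA : substH ψ h₁ = A at hr
    rcases hr with ((hr | hr | hr) | hr | hr) <;> cases hr
    case ex y f =>
      obtain ⟨h₁₁, rfl, rfl⟩ := exists_ex_of_substH_eq_ex (h := h₁) hψ hA
      exact ⟨.ex y (.ex x h₁₁), .inr (.inr (.inl (.ex _ _ _))), rfl⟩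
    case ex f g hx =>
      obtain ⟨h₁₁, h₁₂, rfl, rfl, rfl⟩ := exists_conj_of_substH_eq_conj (h := h₁) hψ hA
      rw [free_substH] at hx
      exact ⟨.conj (.ex x h₁₁) h₁₂, .inr (.inr (.inr (.inl (.ex _ _ _ hx)))), rfl⟩

theorem exists_hrTnoN_of_isAO {Φ' : PFO} (hAO : isAO h) (hψ : ∀ i ∈ holes h, ¬ topAO (ψ i))
    (hh : ¬ isHole h) (hr : rTnoN (substH ψ h) Φ') :
    ∃ h', hrTnoN (fun i => free (ψ i)) h h' ∧ Φ' = substH ψ h' := by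
  cases h with
  | hole => exact absurd trivial hh
  | conj | ex => exact False.elim hAO
  | disj h₁ h₂ =>
    have hψ₁ : ∀ i ∈ holes h₁, ¬ topAO (ψ i) := fun i hi => hψ i (Multiset.mem_add.2 (.inl hi))
    have hψ₂ : ∀ i ∈ holes h₂, ¬ topAO (ψ i) := fun i hi => hψ i (Multiset.mem_add.2 (.inr hi))
    rw [substH] at hr
    generalize hA : substH ψ h₁ = A, hB : substH ψ h₂ = B at hr
    rcases hr with ((hr | hr | hr) | hr | hr) <;> cases hr
    case disj1 =>
      obtain ⟨h₂₁, h₂₂, rfl, rfl, rfl⟩ := exists_disj_of_substH_eq_disj hψ₂ hB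
      exact ⟨.disj (.disj h₁ h₂₁) h₂₂, .inl (.disj1 _ _ _), by rw [← hA]; rfl⟩
    case disj2 =>
      obtain ⟨h₁₁, h₁₂, rfl, rfl, rfl⟩ := exists_disj_of_substH_eq_disj hψ₁ hA
      exact ⟨.disj h₁₁ (.disj h₁₂ h₂), .inl (.disj2 _ _ _), by rw [← hB]; rfl⟩
    case disj =>
      exact ⟨.disj h₂ h₁, .inr (.inl (.disj _ _)), by rw [← hA, ← hB]; rfl⟩
    case all x f hx =>
      obtain ⟨h₁₁, rfl, rfl⟩ := exists_all_of_substH_eq_all hψ₁ hA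
      subst hB
      rw [free_substH] at hx
      exact ⟨.all x (.disj h₁₁ h₂), .inr (.inr (.inr (.inr (.all _ _ _ hx)))), rfl⟩
  | all x h₁ =>
    rw [substH] at hr
    generalize hA : substH ψ h₁ = A at hr
    rcases hr with ((hr | hr | hr) | hr | hr) <;> cases hr
    case all y f =>
      obtain ⟨h₁₁, rfl, rfl⟩ := exists_all_of_substH_eq_all (h := h₁) hψ hA
      exact ⟨.all y (.all x h₁₁), .inr (.inr (.inl (.all _ _ _))), rfl⟩
    case all f g hx =>
      obtain ⟨h₁₁, h₁₂, rfl, rfl, rfl⟩ := exists_disj_of_substH_eq_disj (h := h₁) hψ hA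
      rw [free_substH] at hx
      exact ⟨.disj (.all x h₁₁) h₁₂, .inr (.inr (.inr (.inl (.all _ _ _ hx)))), rfl⟩

def IsSkeletonOrRegionStep (ψ : ℕ → PFO) (h : Holey) (Φ' : PFO) : Prop :=
  (∃ h', HStep (hrTnoN fun i => free (ψ i)) h h' ∧ Φ' = substH ψ h') ∨
    ∃ i ∈ holes h, ∃ g, Step rTnoN (ψ i) g ∧ Φ' = substH (Function.update ψ i g) h

namespace IsSkeletonOrRegionStep

variable {h₁ h₂ : Holey} {Φ : PFO}

theorem conj_left (hd : IsSkeletonOrRegionStep ψ h₁ Φ) (hdisj : Disjoint (holes h₁) (holes h₂)) :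
    IsSkeletonOrRegionStep ψ (.conj h₁ h₂) (.conj Φ (substH ψ h₂)) := by
  rcases hd with ⟨h₁', hh, rfl⟩ | ⟨i, hi, g, hg, rfl⟩
  · exact .inl ⟨.conj h₁' h₂, .conjL hh, rfl⟩
  · refine .inr ⟨i, Multiset.mem_add.2 (.inl hi), g, hg, ?_⟩
    rw [substH, substH_update_of_notMem g (Multiset.disjoint_left.1 hdisj hi)]

theorem conj_right (hd : IsSkeletonOrRegionStep ψ h₂ Φ) (hdisj : Disjoint (holes h₁) (holes h₂)) :
    IsSkeletonOrRegionStep ψ (.conj h₁ h₂) (.conj (substH ψ h₁) Φ) := by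
  rcases hd with ⟨h₂', hh, rfl⟩ | ⟨i, hi, g, hg, rfl⟩
  · exact .inl ⟨.conj h₁ h₂', .conjR hh, rfl⟩
  · refine .inr ⟨i, Multiset.mem_add.2 (.inr hi), g, hg, ?_⟩
    rw [substH, substH_update_of_notMem g (Multiset.disjoint_right.1 hdisj hi)]

theorem disj_left (hd : IsSkeletonOrRegionStep ψ h₁ Φ) (hdisj : Disjoint (holes h₁) (holes h₂)) :
    IsSkeletonOrRegionStep ψ (.disj h₁ h₂) (.disj Φ (substH ψ h₂)) := by
  rcases hd with ⟨h₁', hh, rfl⟩ | ⟨i, hi, g, hg, rfl⟩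
  · exact .inl ⟨.disj h₁' h₂, .disjL hh, rfl⟩
  · refine .inr ⟨i, Multiset.mem_add.2 (.inl hi), g, hg, ?_⟩
    rw [substH, substH_update_of_notMem g (Multiset.disjoint_left.1 hdisj hi)]

theorem disj_right (hd : IsSkeletonOrRegionStep ψ h₂ Φ) (hdisj : Disjoint (holes h₁) (holes h₂)) :
    IsSkeletonOrRegionStep ψ (.disj h₁ h₂) (.disj (substH ψ h₁) Φ) := by
  rcases hd with ⟨h₂', hh, rfl⟩ | ⟨i, hi, g, hg, rfl⟩
  · exact .inl ⟨.disj h₁ h₂', .disjR hh, rfl⟩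
  · refine .inr ⟨i, Multiset.mem_add.2 (.inr hi), g, hg, ?_⟩
    rw [substH, substH_update_of_notMem g (Multiset.disjoint_right.1 hdisj hi)]

theorem ex (x : ℕ) (hd : IsSkeletonOrRegionStep ψ h₁ Φ) :
    IsSkeletonOrRegionStep ψ (.ex x h₁) (.ex x Φ) := by
  rcases hd with ⟨h₁', hh, rfl⟩ | ⟨i, hi, g, hg, rfl⟩
  exacts [.inl ⟨.ex x h₁', .exC hh, rfl⟩, .inr ⟨i, hi, g, hg, rfl⟩]

theorem all (x : ℕ) (hd : IsSkeletonOrRegionStep ψ h₁ Φ) :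
    IsSkeletonOrRegionStep ψ (.all x h₁) (.all x Φ) := by
  rcases hd with ⟨h₁', hh, rfl⟩ | ⟨i, hi, g, hg, rfl⟩
  exacts [.inl ⟨.all x h₁', .allC hh, rfl⟩, .inr ⟨i, hi, g, hg, rfl⟩]

end IsSkeletonOrRegionStep

theorem Separated.isSkeletonOrRegionStep_of_rTnoN {Φ' : PFO} (hs : Separated h ψ)
    (hh : ¬ isHole h) (hr : rTnoN (substH ψ h) Φ') : IsSkeletonOrRegionStep ψ h Φ' := by
  obtain ⟨h', hh', rfl⟩ := hs.elim (fun ⟨hEA, hψ⟩ => exists_hrTnoN_of_isEA hEA hψ hh hr)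
    fun ⟨hAO, hψ⟩ => exists_hrTnoN_of_isAO hAO hψ hh hr
  exact .inl ⟨h', .root hh', rfl⟩

theorem Separated.isSkeletonOrRegionStep (hs : Separated h ψ) (hnd : (holes h).Nodup)
    {Φ' : PFO} (hΦ : Step rTnoN (substH ψ h) Φ') : IsSkeletonOrRegionStep ψ h Φ' := by
  induction h generalizing Φ' with
  | hole i => exact .inr ⟨i, Multiset.mem_singleton_self i, Φ', hΦ, by simp [substH]⟩
  | conj h₁ h₂ ih₁ ih₂ =>
    obtain ⟨hnd₁, hnd₂, hdisj⟩ := Multiset.nodup_add.1 hnd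
    cases hΦ with
    | root hr => exact hs.isSkeletonOrRegionStep_of_rTnoN id hr
    | conjL hΦ₁ => exact (ih₁ (hs.mono And.left False.elim fun _ hi =>
        Multiset.mem_add.2 (.inl hi)) hnd₁ hΦ₁).conj_left hdisj
    | conjR hΦ₂ => exact (ih₂ (hs.mono And.right False.elim fun _ hi =>
        Multiset.mem_add.2 (.inr hi)) hnd₂ hΦ₂).conj_right hdisj
  | disj h₁ h₂ ih₁ ih₂ =>
    obtain ⟨hnd₁, hnd₂, hdisj⟩ := Multiset.nodup_add.1 hnd
    cases hΦ with
    | root hr => exact hs.isSkeletonOrRegionStep_of_rTnoN id hr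
    | disjL hΦ₁ => exact (ih₁ (hs.mono False.elim And.left fun _ hi =>
        Multiset.mem_add.2 (.inl hi)) hnd₁ hΦ₁).disj_left hdisj
    | disjR hΦ₂ => exact (ih₂ (hs.mono False.elim And.right fun _ hi =>
        Multiset.mem_add.2 (.inr hi)) hnd₂ hΦ₂).disj_right hdisj
  | ex x h₁ ih =>
    cases hΦ with
    | root hr => exact hs.isSkeletonOrRegionStep_of_rTnoN id hr
    | exC hΦ₁ => exact (ih (hs.mono id False.elim fun _ => id) hnd hΦ₁).ex x
  | all x h₁ ih =>
    cases hΦ with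
    | root hr => exact hs.isSkeletonOrRegionStep_of_rTnoN id hr
    | allC hΦ₁ => exact (ih (hs.mono False.elim id fun _ => id) hnd hΦ₁).all x

theorem Separated.exists_of_reflTransGen (hs : Separated h ψ) (hnd : (holes h).Nodup) {Φ' : PFO}
    (hΦ : Relation.ReflTransGen (Step rTnoN) (substH ψ h) Φ') :
    ∃ h' ψ', Relation.EqvGen (HStep (hrTnoN fun i => free (ψ i))) h h' ∧
      (∀ i, Relation.EqvGen (Step rTnoN) (ψ i) (ψ' i)) ∧ Φ' = substH ψ' h' := by
  generalize hΦ₀ : substH ψ h = Φ at hΦ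
  induction hΦ using Relation.ReflTransGen.head_induction_on generalizing h ψ with
  | refl => exact ⟨h, ψ, .refl _, fun i => .refl _, hΦ₀.symm⟩
  | head hstep _ ih =>
    subst hΦ₀
    rcases hs.isSkeletonOrRegionStep hnd hstep with ⟨h₁, hh, rfl⟩ | ⟨i, -, g, hg, rfl⟩
    · obtain ⟨h', ψ', hh', hψ', rfl⟩ := ih (hs.of_hStep hh) (hh.holes_eq ▸ hnd) rfl
      exact ⟨h', ψ', .trans _ _ _ (.rel _ _ hh) hh', hψ', rfl⟩
    · obtain ⟨h', ψ', hh', hψ', rfl⟩ := ih (hs.update hg) hnd rfl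
      have hfree : (fun j => free (Function.update ψ i g j)) = fun j => free (ψ j) :=
        funext (apply_update_eq_of_apply_eq (hg.free_eq fun _ _ => free_eq_of_rTnoN))
      refine ⟨h', ψ', hfree ▸ hh', fun j => .trans _ _ _ ?_ (hψ' j), rfl⟩
      rcases eq_or_ne j i with rfl | hj
      · simpa using .rel _ _ hg
      · simpa [hj] using .refl _

theorem not_topEA_of_organizedAO {φ : PFO} (ho : ¬ isAtom φ → OrganizedAO φ) : ¬ topEA φ := by
  intro ht
  obtain ⟨h, ψ, hAO, hh, -, -⟩ := ho (by cases φ <;> simp_all [isAtom, topEA])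
  cases h <;> simp_all [isAO, isHole, substH, topEA]

theorem not_topAO_of_organizedEA {φ : PFO} (ho : ¬ isAtom φ → OrganizedEA φ) : ¬ topAO φ := by
  intro ht
  obtain ⟨h, ψ, hEA, hh, -, -⟩ := ho (by cases φ <;> simp_all [isAtom, topAO])
  cases h <;> simp_all [isEA, isHole, substH, topAO]

end WidthPaper

open WidthPaper WidthPaper.PFO WidthPaper.Holey in
/-- for an organized formula `Φ = h⟦ψ₁,…,ψ_k⟧`, every formula in
`[Φ]_{𝒯∖{N}}` has the form `h'⟦ψ'₁,…,ψ'_k⟧` with `h' ∈ [h]_{𝒯∖{N}}` (rules applied to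
the holey formula under the association `i ↦ free (ψ i)`) and `ψ'_i ∈ [ψ_i]_{𝒯∖{N}}`. -/
theorem regions_rewrite_independently (h : Holey) (ψ : ℕ → PFO)
    (hna : ¬ Holey.isHole h) (hnd : (Holey.holes h).Nodup)
    (horg : (Holey.isEA h ∧ ∀ i ∈ Holey.holes h, ¬ PFO.isAtom (ψ i) → OrganizedAO (ψ i)) ∨
            (Holey.isAO h ∧ ∀ i ∈ Holey.holes h, ¬ PFO.isAtom (ψ i) → OrganizedEA (ψ i)))
    (Φ' : PFO)
    (hΦ' : Relation.EqvGen (Step rTnoN) (substH ψ h) Φ') :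
    ∃ (h' : Holey) (ψ' : ℕ → PFO),
      Relation.EqvGen (HStep (hrTnoN fun i => free (ψ i))) h h' ∧
      (∀ i, Relation.EqvGen (Step rTnoN) (ψ i) (ψ' i)) ∧
      Φ' = substH ψ' h' := by
  have hs : Separated h ψ := horg.imp
    (fun ⟨hEA, ho⟩ => ⟨hEA, fun i hi => not_topEA_of_organizedAO (ho i hi)⟩)
    (fun ⟨hAO, ho⟩ => ⟨hAO, fun i hi => not_topAO_of_organizedEA (ho i hi)⟩)
  rw [Relation.EqvGen.eqvGen_eq_reflTransGen] at hΦ'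
  exact hs.exists_of_reflTransGen hnd hΦ'
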